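/- arXiv:2201.08971 — 2 statements merged into one kernel-verified Lean document; each statement's English description precedes it below -/
import Mathlib

section
/- Suppose n ∈ C([0,1]) and σ ∈ C²([0,1]) satisfy Assumption A with constants n₁, n₂, M₁, M₂, let m ≥ 1 be an integer and let k > 0. Let ψ : (0,1] → ℝ be twice differentiable, not identically zero, and satisfy ψ''(r) + [k²n(r)²/σ(r) + σ'(r)²/(4σ(r)²) − σ''(r)/(2σ(r)) − σ'(r)/(2σ(r)r) − (m² − 1/4)/r²]·ψ(r) = 0 for all r ∈ (0,1]. Suppose 0 < a < b ≤ 1 are such that J_m(k√M₁·a) = J_m(k√M₁·b) = 0 and J_m(k√M₁·r) ≠ 0 for all r ∈ (a,b). Then ψ has at least one zero in the interval [a,b]. -/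
/-!
With `c = k√M₁`, the function `ξ r = √r · J_m(c r)` solves `ξ'' + Q ξ = 0` for
`Q r = c² − (m² − 1/4)/r²`, and Assumption A makes `Q` a lower bound for the potential `q` of
the equation of `ψ`. If `ψ` had no zero on `[a, b]`, Picone's function
`P = ξ (ξ'ψ − ξψ')/ψ` would satisfy `P' = ((ξ'ψ − ξψ')/ψ)² + (q − Q) ξ² ≥ 0` and vanish at the
zeros `a`, `b` of `ξ`, hence vanish identically. Since `ξ ≠ 0` on `(a, b)`, the Wronskian
`ξ'ψ − ξψ'` vanishes there, so `ξ/ψ` is constant, equal to its value `0` at `a`: a contradiction.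
-/

open Set

noncomputable section

/-- The Bessel function of the first kind of order `ν`:
`J_ν(x) = Σ_{s=0}^∞ ((−1)^s / (s!·Γ(ν+s+1)))·(x/2)^{2s+ν}`. -/
def besselJ (ν : ℝ) (x : ℝ) : ℝ :=
  ∑' s : ℕ, ((-1 : ℝ) ^ s / ((s.factorial : ℝ) * Real.Gamma (ν + (s : ℝ) + 1)))
    * (x / 2) ^ (2 * (s : ℝ) + ν)

/-- Assumption A: `n ∈ C([0,1])`, `σ ∈ C²([0,1])`, with constants
`1 < n₁ < n₂`, `1 < M₁ < M₂`, such that on `[0,1]` one has `n₁ < n < n₂`, `σ' ≤ 0`,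
`M₁ ≤ n²/σ ≤ M₂` and `σ'² ≥ 2σ''σ`. -/
def AssumptionA (n σ : ℝ → ℝ) (n₁ n₂ M₁ M₂ : ℝ) : Prop :=
  1 < n₁ ∧ n₁ < n₂ ∧ 1 < M₁ ∧ M₁ < M₂ ∧
  ContinuousOn n (Icc 0 1) ∧ ContDiffOn ℝ 2 σ (Icc 0 1) ∧
  ∀ r ∈ Icc (0:ℝ) 1,
    n₁ < n r ∧ n r < n₂ ∧
    derivWithin σ (Icc 0 1) r ≤ 0 ∧
    M₁ ≤ n r ^ 2 / σ r ∧ n r ^ 2 / σ r ≤ M₂ ∧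
    2 * derivWithin (derivWithin σ (Icc 0 1)) (Icc 0 1) r * σ r
      ≤ (derivWithin σ (Icc 0 1) r) ^ 2

section Sturm

variable {ξ ξ' ψ ψ' q Q : ℝ → ℝ}

theorem hasDerivWithinAt_picone {s : Set ℝ} {r : ℝ}
    (hξ : HasDerivWithinAt ξ (ξ' r) s r) (hξ' : HasDerivWithinAt ξ' (-Q r * ξ r) s r)
    (hψ : HasDerivWithinAt ψ (ψ' r) s r) (hψ' : HasDerivWithinAt ψ' (-q r * ψ r) s r)
    (hψr : ψ r ≠ 0) :
    HasDerivWithinAt (fun t => ξ t * (ξ' t * ψ t - ξ t * ψ' t) / ψ t)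
      (((ξ' r * ψ r - ξ r * ψ' r) / ψ r) ^ 2 + (q r - Q r) * ξ r ^ 2) s r := by
  refine ((hξ.fun_mul ((hξ'.fun_mul hψ).fun_sub (hξ.fun_mul hψ'))).fun_div hψ hψr).congr_deriv
    ?_
  field_simp
  ring

theorem eq_of_hasDerivAt_eq_zero_of_mem_Ioo {g : ℝ → ℝ} {a x : ℝ} (hax : a < x)
    (hg : ContinuousOn g (Icc a x)) (hg' : ∀ r ∈ Ioo a x, HasDerivAt g 0 r) : g x = g a := by
  obtain ⟨c, -, hc⟩ := exists_hasDerivAt_eq_slope g (fun _ => 0) hax hg hg'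
  rw [eq_comm, div_eq_zero_iff, sub_eq_zero] at hc
  exact hc.resolve_right (sub_pos.2 hax).ne'

theorem exists_eq_zero_of_sturm_comparison {a b : ℝ} (hab : a < b)
    (hξ : ∀ r ∈ Icc a b, HasDerivWithinAt ξ (ξ' r) (Icc a b) r)
    (hξ' : ∀ r ∈ Icc a b, HasDerivWithinAt ξ' (-Q r * ξ r) (Icc a b) r)
    (hψ : ∀ r ∈ Icc a b, HasDerivWithinAt ψ (ψ' r) (Icc a b) r)
    (hψ' : ∀ r ∈ Icc a b, HasDerivWithinAt ψ' (-q r * ψ r) (Icc a b) r)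
    (hQq : ∀ r ∈ Ioo a b, Q r ≤ q r) (hξa : ξ a = 0) (hξb : ξ b = 0)
    (hξ_ne : ∀ r ∈ Ioo a b, ξ r ≠ 0) :
    ∃ r ∈ Icc a b, ψ r = 0 := by
  by_contra! hψ_ne
  set W : ℝ → ℝ := fun t => ξ' t * ψ t - ξ t * ψ' t
  set P : ℝ → ℝ := fun t => ξ t * W t / ψ t
  have hP : ∀ r ∈ Icc a b, HasDerivWithinAt P ((W r / ψ r) ^ 2 + (q r - Q r) * ξ r ^ 2)
      (Icc a b) r := fun r hr =>
    hasDerivWithinAt_picone (hξ r hr) (hξ' r hr) (hψ r hr) (hψ' r hr) (hψ_ne r hr)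
  have hP_mono : MonotoneOn P (Icc a b) := by
    refine monotoneOn_of_hasDerivWithinAt_nonneg (convex_Icc a b)
      (fun r hr => (hP r hr).continuousWithinAt)
      (fun r hr => (hP r (interior_subset hr)).mono interior_subset) fun r hr => ?_
    rw [interior_Icc] at hr
    have := sub_nonneg.2 (hQq r hr)
    positivity
  have hW : ∀ r ∈ Ioo a b, W r = 0 := by
    intro r hr
    have hPr : P r = 0 := le_antisymm
      (by simpa [P, hξb] using hP_mono (Ioo_subset_Icc_self hr) (right_mem_Icc.2 hab.le) hr.2.le)
      (by simpa [P, hξa] using hP_mono (left_mem_Icc.2 hab.le) (Ioo_subset_Icc_self hr) hr.1.le)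
    simpa [P, hξ_ne r hr, hψ_ne r (Ioo_subset_Icc_self hr)] using hPr
  have hg (r) (hr : r ∈ Icc a b) :
      HasDerivWithinAt (fun t => ξ t / ψ t) (W r / ψ r ^ 2) (Icc a b) r :=
    (hξ r hr).fun_div (hψ r hr) (hψ_ne r hr)
  obtain ⟨x, hx⟩ := nonempty_Ioo.2 hab
  have hx_zero : ξ x / ψ x = ξ a / ψ a :=
    eq_of_hasDerivAt_eq_zero_of_mem_Ioo hx.1
      (fun r hr => (hg r ⟨hr.1, hr.2.trans hx.2.le⟩).continuousWithinAt.mono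
        (Icc_subset_Icc_right hx.2.le))
      fun r hr => by
        have hr' : r ∈ Ioo a b := ⟨hr.1, hr.2.trans hx.2⟩
        simpa [hW r hr'] using (hg r (Ioo_subset_Icc_self hr')).hasDerivAt (Icc_mem_nhds hr'.1 hr'.2)
  simp [hξa, hξ_ne x hx, hψ_ne x (Ioo_subset_Icc_self hx)] at hx_zero

end Sturm

section EntireSeries

variable {a : ℕ → ℝ} {e : ℕ → ℕ}

theorem summable_mul_mul_pow_sub_one (ha : ∀ x, Summable fun s => a s * x ^ e s) (x : ℝ) :
    Summable fun s => a s * e s * x ^ (e s - 1) := by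
  set R := |x| + 1
  have hR : 1 ≤ R := by simp [R]
  refine .of_norm_bounded (ha (2 * R)).abs fun s => ?_
  have he : (e s : ℝ) ≤ 2 ^ e s := by exact_mod_cast (Nat.lt_two_pow_self).le
  have hx : |x| ^ (e s - 1) ≤ R ^ e s :=
    (pow_le_pow_left₀ (abs_nonneg x) (by simp [R]) _).trans
      (pow_le_pow_right₀ hR (Nat.sub_le _ _))
  calc ‖a s * e s * x ^ (e s - 1)‖ = |a s| * (e s * |x| ^ (e s - 1)) := by
        rw [Real.norm_eq_abs, abs_mul, abs_mul, abs_pow, Nat.abs_cast, mul_assoc]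
    _ ≤ |a s| * (2 ^ e s * R ^ e s) := by gcongr
    _ = |a s * (2 * R) ^ e s| := by
        rw [abs_mul, abs_of_nonneg (by positivity : (0:ℝ) ≤ (2 * R) ^ e s), mul_pow]

theorem hasDerivAt_tsum_mul_pow (ha : ∀ x, Summable fun s => a s * x ^ e s) (y : ℝ) :
    HasDerivAt (fun x => ∑' s, a s * x ^ e s) (∑' s, a s * e s * y ^ (e s - 1)) y := by
  set R := |y| + 1
  have hy : y ∈ Ioo (-R) R := abs_lt.1 (by simp [R])
  refine hasDerivAt_tsum_of_isPreconnected (g := fun s x => a s * x ^ e s)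
    (g' := fun s x => a s * e s * x ^ (e s - 1)) (summable_mul_mul_pow_sub_one ha R).abs isOpen_Ioo
    isPreconnected_Ioo (fun s x _ => ?_) (fun s x hx => ?_) hy (ha y) hy
  · exact ((hasDerivAt_pow (e s) x).const_mul (a s)).congr_deriv (by ring)
  · simp only [Real.norm_eq_abs, abs_mul, abs_pow, abs_of_pos (by positivity : 0 < R)]
    gcongr
    exact (abs_lt.2 hx).le

end EntireSeries

open Nat

def besselCoef (m s : ℕ) : ℝ := (-1) ^ s / (s ! * (m + s)! * 2 ^ (2 * s + m))

theorem besselJ_natCast (m : ℕ) :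
    besselJ m = fun x => ∑' s, besselCoef m s * x ^ (2 * s + m) := by
  ext x
  refine tsum_congr fun s => ?_
  have hΓ : (m : ℝ) + s + 1 = ((m + s : ℕ) : ℝ) + 1 := by push_cast; ring
  have hexp : 2 * (s : ℝ) + m = ((2 * s + m : ℕ) : ℝ) := by push_cast; ring
  rw [hΓ, Real.Gamma_nat_eq_factorial, hexp, Real.rpow_natCast, besselCoef, div_pow]
  ring

theorem summable_besselCoef_mul_pow (m : ℕ) (x : ℝ) :
    Summable fun s => besselCoef m s * x ^ (2 * s + m) := by
  refine .of_norm_bounded ((Real.summable_pow_div_factorial (x ^ 2)).mul_left (|x| ^ m)) fun s => ?_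
  have hc : |besselCoef m s| ≤ 1 / s ! := by
    rw [besselCoef, abs_div, abs_pow, abs_neg, abs_one, one_pow, abs_of_pos (by positivity)]
    have h1 : (1 : ℝ) ≤ (m + s)! := by exact_mod_cast (m + s).factorial_pos
    have h2 : (1 : ℝ) ≤ 2 ^ (2 * s + m) := one_le_pow₀ one_le_two
    gcongr
    rw [mul_assoc]
    exact le_mul_of_one_le_right (by positivity) (one_le_mul_of_one_le_of_one_le h1 h2)
  calc ‖besselCoef m s * x ^ (2 * s + m)‖ = |besselCoef m s| * ((x ^ 2) ^ s * |x| ^ m) := by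
        rw [Real.norm_eq_abs, abs_mul, abs_pow, pow_add, pow_mul, sq_abs]
    _ ≤ 1 / s ! * ((x ^ 2) ^ s * |x| ^ m) := by gcongr
    _ = |x| ^ m * ((x ^ 2) ^ s / s !) := by ring

theorem besselCoef_succ (m s : ℕ) :
    4 * (s + 1) * (m + s + 1) * besselCoef m (s + 1) = -besselCoef m s := by
  rw [besselCoef, besselCoef, pow_succ (-1 : ℝ) s, show 2 * (s + 1) + m = 2 * s + m + 2 by ring,
    pow_add, show m + (s + 1) = m + s + 1 by ring, Nat.factorial_succ (m + s),
    Nat.factorial_succ s]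
  push_cast
  field_simp
  ring

theorem sq_mul_add_mul_pow_derivs (n : ℕ) (x : ℝ) :
    x ^ 2 * (n * (n - 1 : ℕ) * x ^ (n - 1 - 1)) + x * (n * x ^ (n - 1)) = n ^ 2 * x ^ n := by
  rcases n with _ | _ | n
  · simp
  · simp
  · simp only [Nat.add_sub_cancel]
    push_cast
    ring

theorem hasDerivAt_besselJ_natCast (m : ℕ) (x : ℝ) :
    HasDerivAt (besselJ m)
      (∑' s, besselCoef m s * (2 * s + m : ℕ) * x ^ (2 * s + m - 1)) x := by
  rw [besselJ_natCast]
  exact hasDerivAt_tsum_mul_pow (summable_besselCoef_mul_pow m) x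

theorem hasDerivAt_deriv_besselJ_natCast (m : ℕ) (x : ℝ) :
    HasDerivAt (deriv (besselJ m))
      (∑' s, besselCoef m s * (2 * s + m : ℕ) * (2 * s + m - 1 : ℕ) * x ^ (2 * s + m - 1 - 1)) x := by
  rw [show deriv (besselJ m) = _ from funext fun y => (hasDerivAt_besselJ_natCast m y).deriv]
  exact hasDerivAt_tsum_mul_pow (summable_mul_mul_pow_sub_one (summable_besselCoef_mul_pow m)) x

theorem besselJ_natCast_ode (m : ℕ) (x : ℝ) :
    x ^ 2 * deriv (deriv (besselJ m)) x + x * deriv (besselJ m) x + (x ^ 2 - m ^ 2) * besselJ m x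
      = 0 := by
  have hJ : HasSum (fun s => besselCoef m s * x ^ (2 * s + m)) (besselJ m x) := by
    rw [besselJ_natCast]
    exact (summable_besselCoef_mul_pow m x).hasSum
  have hJ' := (summable_mul_mul_pow_sub_one (summable_besselCoef_mul_pow m) x).hasSum
  have hJ'' := (summable_mul_mul_pow_sub_one
    (summable_mul_mul_pow_sub_one (summable_besselCoef_mul_pow m)) x).hasSum
  rw [← (hasDerivAt_besselJ_natCast m x).deriv] at hJ'
  rw [← (hasDerivAt_deriv_besselJ_natCast m x).deriv] at hJ''
  -- termwise, `x²J'' + xJ' − m²J` has coefficients `4s(m+s)·c_s`, a shift of `−x²J`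
  set u : ℕ → ℝ := fun s => 4 * s * (m + s) * besselCoef m s * x ^ (2 * s + m)
  have hu : HasSum u (x ^ 2 * deriv (deriv (besselJ m)) x + x * deriv (besselJ m) x
      - m ^ 2 * besselJ m x) := by
    refine (((hJ''.mul_left (x ^ 2)).add (hJ'.mul_left x)).sub
      (hJ.mul_left ((m : ℝ) ^ 2))).congr_fun fun s => ?_
    have hn : ((2 * s + m : ℕ) : ℝ) ^ 2 - m ^ 2 = 4 * s * (m + s) := by push_cast; ring
    linear_combination (-besselCoef m s) * sq_mul_add_mul_pow_derivs (2 * s + m) x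
      - besselCoef m s * x ^ (2 * s + m) * hn
  have hu_shift : HasSum (fun s => u (s + 1)) (-(x ^ 2 * besselJ m x)) := by
    refine (hJ.mul_left (x ^ 2)).neg.congr_fun fun s => ?_
    simp only [u]
    rw [show 2 * (s + 1) + m = 2 * s + m + 2 by ring, pow_add]
    push_cast
    linear_combination x ^ 2 * x ^ (2 * s + m) * besselCoef_succ m s
  have hu' := (hasSum_nat_add_iff' 1).2 hu
  simp only [Finset.range_one, Finset.sum_singleton, u, CharP.cast_eq_zero, mul_zero, zero_mul,
    sub_zero] at hu'
  linear_combination hu'.unique hu_shift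

theorem differentiable_besselJ_natCast (m : ℕ) : Differentiable ℝ (besselJ m) :=
  fun x => (hasDerivAt_besselJ_natCast m x).differentiableAt

theorem differentiable_deriv_besselJ_natCast (m : ℕ) : Differentiable ℝ (deriv (besselJ m)) :=
  fun x => (hasDerivAt_deriv_besselJ_natCast m x).differentiableAt

section Liouville

variable {f f' f'' : ℝ → ℝ} {c r : ℝ}

theorem hasDerivAt_comp_const_mul (hf : HasDerivAt f (f' (c * r)) (c * r)) :
    HasDerivAt (fun t => f (c * t)) (c * f' (c * r)) r :=
  (hf.comp r ((hasDerivAt_id' r).const_mul c)).congr_deriv (by ring)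

theorem hasDerivAt_sqrt_mul_comp_const_mul (hf : HasDerivAt f (f' (c * r)) (c * r)) (hr : 0 < r) :
    HasDerivAt (fun t => √t * f (c * t))
      (f (c * r) / (2 * √r) + √r * (c * f' (c * r))) r := by
  refine ((Real.hasDerivAt_sqrt hr.ne').fun_mul (hasDerivAt_comp_const_mul hf)).congr_deriv ?_
  ring

theorem hasDerivAt_sqrt_mul_comp_const_mul_deriv (ν : ℝ)
    (hf : HasDerivAt f (f' (c * r)) (c * r)) (hf' : HasDerivAt f' (f'' (c * r)) (c * r))
    (hode : (c * r) ^ 2 * f'' (c * r) + c * r * f' (c * r) + ((c * r) ^ 2 - ν ^ 2) * f (c * r) = 0)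
    (hr : 0 < r) :
    HasDerivAt (fun t => f (c * t) / (2 * √t) + √t * (c * f' (c * t)))
      (-(c ^ 2 - (ν ^ 2 - 1 / 4) / r ^ 2) * (√r * f (c * r))) r := by
  have hsqrt := Real.hasDerivAt_sqrt hr.ne'
  have hs : 0 < √r := Real.sqrt_pos.2 hr
  refine (((hasDerivAt_comp_const_mul hf).fun_div (hsqrt.const_mul 2) (by positivity)).fun_add
    (hsqrt.fun_mul ((hasDerivAt_comp_const_mul hf').const_mul c))).congr_deriv ?_
  generalize f (c * r) = F, f' (c * r) = F', f'' (c * r) = F'' at hode ⊢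
  obtain ⟨ρ, hρ, rfl⟩ : ∃ ρ, 0 < ρ ∧ r = ρ ^ 2 := ⟨√r, hs, (Real.sq_sqrt hr.le).symm⟩
  rw [Real.sqrt_sq hρ.le]
  field_simp
  linear_combination 16 * hode

end Liouville

theorem AssumptionA.sigma_pos {n σ : ℝ → ℝ} {n₁ n₂ M₁ M₂ : ℝ}
    (hA : AssumptionA n σ n₁ n₂ M₁ M₂) {r : ℝ} (hr : r ∈ Icc 0 1) : 0 < σ r := by
  obtain ⟨hn₁, -, hM₁, -, -, -, h⟩ := hA
  obtain ⟨hn, -, -, hM, -⟩ := h r hr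
  by_contra! hσ
  linarith [div_nonpos_of_nonneg_of_nonpos (sq_nonneg (n r)) hσ]

def radialPotential (n σ : ℝ → ℝ) (k ν r : ℝ) : ℝ :=
  k ^ 2 * n r ^ 2 / σ r
    + (derivWithin σ (Icc 0 1) r) ^ 2 / (4 * σ r ^ 2)
    - derivWithin (derivWithin σ (Icc 0 1)) (Icc 0 1) r / (2 * σ r)
    - derivWithin σ (Icc 0 1) r / (2 * σ r * r)
    - (ν ^ 2 - 1 / 4) / r ^ 2

theorem AssumptionA.le_radialPotential {n σ : ℝ → ℝ} {n₁ n₂ M₁ M₂ : ℝ}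
    (hA : AssumptionA n σ n₁ n₂ M₁ M₂) (k ν : ℝ) {r : ℝ} (hr : r ∈ Ioc 0 1) :
    k ^ 2 * M₁ - (ν ^ 2 - 1 / 4) / r ^ 2 ≤ radialPotential n σ k ν r := by
  have hσ := hA.sigma_pos (Ioc_subset_Icc_self hr)
  obtain ⟨-, -, -, -, -, -, h⟩ := hA
  obtain ⟨-, -, hσ', hM, -, hσ''⟩ := h r (Ioc_subset_Icc_self hr)
  have hn : k ^ 2 * M₁ ≤ k ^ 2 * n r ^ 2 / σ r := by
    rw [mul_div_assoc]
    exact mul_le_mul_of_nonneg_left hM (sq_nonneg k)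
  have hσ''_le : derivWithin (derivWithin σ (Icc 0 1)) (Icc 0 1) r / (2 * σ r)
      ≤ (derivWithin σ (Icc 0 1) r) ^ 2 / (4 * σ r ^ 2) := by
    rw [div_le_div_iff₀ (by positivity) (by positivity)]
    nlinarith
  have hσ'_le : derivWithin σ (Icc 0 1) r / (2 * σ r * r) ≤ 0 :=
    div_nonpos_of_nonpos_of_nonneg hσ' (by have := hr.1; positivity)
  unfold radialPotential
  linarith

theorem sturm_comparison_2d_general
    (n σ : ℝ → ℝ) (n₁ n₂ M₁ M₂ : ℝ) (hA : AssumptionA n σ n₁ n₂ M₁ M₂)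
    (m : ℕ) (k : ℝ)
    (ψ : ℝ → ℝ)
    (hψ : ∀ r ∈ Ioc (0:ℝ) 1,
      DifferentiableWithinAt ℝ ψ (Ioc 0 1) r ∧
      DifferentiableWithinAt ℝ (derivWithin ψ (Ioc 0 1)) (Ioc 0 1) r)
    (hode : ∀ r ∈ Ioc (0:ℝ) 1,
      derivWithin (derivWithin ψ (Ioc 0 1)) (Ioc 0 1) r
        + (k ^ 2 * n r ^ 2 / σ r
            + (derivWithin σ (Icc 0 1) r) ^ 2 / (4 * σ r ^ 2)
            - derivWithin (derivWithin σ (Icc 0 1)) (Icc 0 1) r / (2 * σ r)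
            - derivWithin σ (Icc 0 1) r / (2 * σ r * r)
            - ((m : ℝ) ^ 2 - 1 / 4) / r ^ 2) * ψ r = 0)
    (a b : ℝ) (ha : 0 < a) (hab : a < b) (hb : b ≤ 1)
    (hJa : besselJ m (k * Real.sqrt M₁ * a) = 0)
    (hJb : besselJ m (k * Real.sqrt M₁ * b) = 0)
    (hJ : ∀ r ∈ Ioo a b, besselJ m (k * Real.sqrt M₁ * r) ≠ 0) :
    ∃ r ∈ Icc a b, ψ r = 0 := by
  set c := k * √M₁
  have hc : c ^ 2 = k ^ 2 * M₁ := by rw [mul_pow, Real.sq_sqrt (by linarith [hA.2.2.1])]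
  have hsub : Icc a b ⊆ Ioc 0 1 := fun r hr => ⟨ha.trans_le hr.1, hr.2.trans hb⟩
  have hJ' (x : ℝ) := (differentiable_besselJ_natCast m x).hasDerivAt
  have hJ'' (x : ℝ) := (differentiable_deriv_besselJ_natCast m x).hasDerivAt
  refine exists_eq_zero_of_sturm_comparison hab (ξ := fun r => √r * besselJ m (c * r))
    (q := radialPotential n σ k m) (Q := fun r => c ^ 2 - ((m : ℝ) ^ 2 - 1 / 4) / r ^ 2)
    (fun r hr => (hasDerivAt_sqrt_mul_comp_const_mul (hJ' _) (ha.trans_le hr.1)).hasDerivWithinAt)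
    (fun r hr => (hasDerivAt_sqrt_mul_comp_const_mul_deriv m (hJ' _) (hJ'' _)
      (besselJ_natCast_ode m _) (ha.trans_le hr.1)).hasDerivWithinAt)
    (fun r hr => (hψ r (hsub hr)).1.hasDerivWithinAt.mono hsub)
    (fun r hr => ((hψ r (hsub hr)).2.hasDerivWithinAt.mono hsub).congr_deriv
      ((eq_neg_of_add_eq_zero_left (hode r (hsub hr))).trans (neg_mul _ _).symm))
    (fun r hr => hc ▸ (hA.le_radialPotential k m (hsub (Ioo_subset_Icc_self hr))))
    (by simp [c, hJa]) (by simp [c, hJb])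
    (fun r hr => mul_ne_zero (Real.sqrt_pos.2 (ha.trans hr.1)).ne' (hJ r hr))

/-- Sturm comparison in two dimensions: between two consecutive zeros of
`r ↦ J_m(k√M₁·r)` in `(0,1]`, a nontrivial solution `ψ` of
`ψ'' + [k²n²/σ + σ'²/(4σ²) − σ''/(2σ) − σ'/(2σr) − (m² − 1/4)/r²]ψ = 0`
has at least one zero. -/
theorem sturm_comparison_2d
    (n σ : ℝ → ℝ) (n₁ n₂ M₁ M₂ : ℝ) (hA : AssumptionA n σ n₁ n₂ M₁ M₂)
    (m : ℕ) (hm : 1 ≤ m) (k : ℝ) (hk : 0 < k)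
    (ψ : ℝ → ℝ)
    (hψ : ∀ r ∈ Ioc (0:ℝ) 1,
      DifferentiableWithinAt ℝ ψ (Ioc 0 1) r ∧
      DifferentiableWithinAt ℝ (derivWithin ψ (Ioc 0 1)) (Ioc 0 1) r)
    (hψne : ¬ ∀ r ∈ Ioc (0:ℝ) 1, ψ r = 0)
    (hode : ∀ r ∈ Ioc (0:ℝ) 1,
      derivWithin (derivWithin ψ (Ioc 0 1)) (Ioc 0 1) r
        + (k ^ 2 * n r ^ 2 / σ r
            + (derivWithin σ (Icc 0 1) r) ^ 2 / (4 * σ r ^ 2)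
            - derivWithin (derivWithin σ (Icc 0 1)) (Icc 0 1) r / (2 * σ r)
            - derivWithin σ (Icc 0 1) r / (2 * σ r * r)
            - ((m : ℝ) ^ 2 - 1 / 4) / r ^ 2) * ψ r = 0)
    (a b : ℝ) (ha : 0 < a) (hab : a < b) (hb : b ≤ 1)
    (hJa : besselJ m (k * Real.sqrt M₁ * a) = 0)
    (hJb : besselJ m (k * Real.sqrt M₁ * b) = 0)
    (hJ : ∀ r ∈ Ioo a b, besselJ m (k * Real.sqrt M₁ * r) ≠ 0) :
    ∃ r ∈ Icc a b, ψ r = 0 :=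
  sturm_comparison_2d_general n σ n₁ n₂ M₁ M₂ hA m k ψ hψ hode a b ha hab hb hJa hJb hJ

end
end

section
/- Let σ, n > 0 be constants with n > √σ, and let m ≥ 1 be an integer. Define the spherical Bessel function j_m(x) = √(π/(2x))·J_{m+1/2}(x) for x > 0, and define f : (0,∞) → ℝ by f(k) = J_{m+1/2}(k·n/√σ)·j_m'(k) − √σ·n·j_m'(k·n/√σ)·J_{m+1/2}(k), where primes denote derivatives. Suppose 0 < a < b satisfy J_{m+1/2}(a) = J_{m+1/2}(b) = 0, J_{m+1/2}(r) ≠ 0 for all r ∈ (a,b), and J_{m+1/2}(r) > 0 for all r ∈ (0, √σ·b/n]. Then f has at least one root in the open interval (√σ·a/n, √σ·b/n). -/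
/-!
At `k₁ = √σ·a/n` and `k₂ = √σ·b/n` the scaled argument `k·n/√σ` hits the zeros `a` and `b`,
so `f(kᵢ) = -√σ·n·√(π/(2z))·J(kᵢ)·J'(z)` with `z = a, b` (writing `J = J_{m+1/2}`). The
factors `J(kᵢ)` are positive by hypothesis, and `J'(a)`, `J'(b)` have opposite signs: `J`
keeps one sign on `(a, b)`, and neither derivative vanishes, since `J` solves Bessel's equation,
which is a regular linear ODE away from `0`, so a double zero at `a` or `b` would force `J = 0`
on all of `[k₂, a]`. Hence `f(k₁)·f(k₂) < 0` and the intermediate value theorem gives the root.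
The regularity of `J` comes from `J_ν(x) = (x/2)^ν·P((x/2)²)` with `P` an entire power series.
-/

open Set

noncomputable section

/-- The spherical Bessel function `j_m(x) = √(π/(2x))·J_{m+1/2}(x)`. -/
def sphBesselJ (m : ℕ) (x : ℝ) : ℝ :=
  Real.sqrt (Real.pi / (2 * x)) * besselJ ((m : ℝ) + 1 / 2) x

open Filter Topology Real
open scoped Nat NNReal

def powerSeriesFun (c : ℕ → ℝ) (t : ℝ) : ℝ := ∑' s, c s * t ^ s

def derivCoeff (c : ℕ → ℝ) (s : ℕ) : ℝ := (s + 1) * c (s + 1)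

section FactorialBound

variable {c : ℕ → ℝ} {A : ℝ}

lemma summable_powerSeriesFun (hc : ∀ s, |c s| ≤ A / s !) (t : ℝ) :
    Summable fun s => c s * t ^ s := by
  refine .of_norm_bounded ((Real.summable_pow_div_factorial |t|).mul_left A) fun s => ?_
  rw [norm_mul, norm_pow, Real.norm_eq_abs, Real.norm_eq_abs]
  calc |c s| * |t| ^ s ≤ A / s ! * |t| ^ s := by gcongr; exact hc s
    _ = A * (|t| ^ s / s !) := by ring

lemma abs_derivCoeff_le (hc : ∀ s, |c s| ≤ A / s !) (s : ℕ) :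
    |derivCoeff c s| ≤ A / s ! := by
  rw [derivCoeff, abs_mul, abs_of_nonneg (by positivity)]
  calc ((s : ℝ) + 1) * |c (s + 1)| ≤ (s + 1) * (A / (s + 1)!) := by gcongr; exact hc _
    _ = A / s ! := by rw [Nat.factorial_succ]; push_cast; field_simp

lemma hasDerivAt_powerSeriesFun (hc : ∀ s, |c s| ≤ A / s !) (t : ℝ) :
    HasDerivAt (powerSeriesFun c) (powerSeriesFun (derivCoeff c) t) t := by
  have hA : 0 ≤ A := by simpa using (abs_nonneg _).trans (hc 0)
  set R := |t| + 1
  have hR : 1 ≤ R := by simp [R]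
  have ht : t ∈ Metric.ball (0 : ℝ) R := by simp [R]
  have hbound : ∀ (s : ℕ), ∀ y ∈ Metric.ball (0 : ℝ) R,
      ‖c s * (s * y ^ (s - 1))‖ ≤ A * ((2 * R) ^ s / s !) := by
    intro s y hy
    have hy : |y| ≤ R := by simpa using (mem_ball_zero_iff.mp hy).le
    rw [norm_mul, norm_mul, norm_pow, Real.norm_eq_abs, Real.norm_eq_abs, Real.norm_eq_abs,
      Nat.abs_cast]
    calc |c s| * (s * |y| ^ (s - 1)) ≤ A / s ! * (2 ^ s * R ^ s) := by
          gcongr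
          · exact hc s
          · exact_mod_cast Nat.lt_two_pow_self.le
          · exact (pow_le_pow_left₀ (abs_nonneg y) hy _).trans
              (pow_le_pow_right₀ hR (by omega))
      _ = A * ((2 * R) ^ s / s !) := by rw [mul_pow]; ring
  have hderiv : HasDerivAt (powerSeriesFun c) (∑' s : ℕ, c s * (s * t ^ (s - 1))) t :=
    hasDerivAt_tsum_of_isPreconnected ((Real.summable_pow_div_factorial (2 * R)).mul_left A)
      Metric.isOpen_ball (convex_ball (0 : ℝ) R).isPreconnected
      (fun s y _ => (hasDerivAt_pow s y).const_mul (c s)) hbound ht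
      (summable_powerSeriesFun hc t) ht
  convert hderiv using 1
  have hshift : Summable fun s : ℕ => c (s + 1) * ((s + 1 : ℕ) * t ^ (s + 1 - 1)) := by
    refine (summable_powerSeriesFun (abs_derivCoeff_le hc) t).congr fun s => ?_
    simp only [derivCoeff, Nat.add_sub_cancel, Nat.cast_succ]
    ring
  rw [tsum_eq_zero_add' (f := fun s : ℕ => c s * (s * t ^ (s - 1))) hshift]
  simp only [Nat.cast_zero, zero_mul, mul_zero, zero_add, Nat.add_sub_cancel, Nat.cast_succ]
  exact tsum_congr fun s => by rw [derivCoeff]; ring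

end FactorialBound

section Bessel

variable {ν x : ℝ}

def besselCoeff (ν : ℝ) (s : ℕ) : ℝ := (-1) ^ s / (s ! * Real.Gamma (ν + s + 1))

lemma Gamma_add_one_le_Gamma_add_natCast_add_one (hν : 0 ≤ ν) (s : ℕ) :
    Real.Gamma (ν + 1) ≤ Real.Gamma (ν + s + 1) := by
  induction s with
  | zero => simp
  | succ k ih =>
    have hk : 0 < ν + k + 1 := by positivity
    rw [Nat.cast_succ, ← add_assoc, Real.Gamma_add_one hk.ne']
    nlinarith [Real.Gamma_pos_of_pos hk]

lemma abs_besselCoeff_le (hν : 0 ≤ ν) (s : ℕ) :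
    |besselCoeff ν s| ≤ (Real.Gamma (ν + 1))⁻¹ / s ! := by
  have hΓ : 0 < Real.Gamma (ν + 1) := Real.Gamma_pos_of_pos (by positivity)
  rw [besselCoeff, abs_div, abs_pow, abs_neg, abs_one, one_pow,
    abs_of_pos (by positivity), one_div, inv_div_left]
  gcongr
  exact Gamma_add_one_le_Gamma_add_natCast_add_one hν s

lemma besselCoeff_recurrence (hν : 0 ≤ ν) (s : ℕ) :
    (s + ν + 1) * derivCoeff (besselCoeff ν) s + besselCoeff ν s = 0 := by
  have hΓ : 0 < Real.Gamma (ν + s + 1) := Real.Gamma_pos_of_pos (by positivity)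
  simp only [derivCoeff, besselCoeff, Nat.factorial_succ, Nat.cast_mul, Nat.cast_succ,
    pow_succ, ← add_assoc, Real.Gamma_add_one (by positivity : ν + s + 1 ≠ 0)]
  field_simp
  ring

lemma powerSeriesFun_besselCoeff_ode (hν : 0 ≤ ν) (t : ℝ) :
    t * powerSeriesFun (derivCoeff (derivCoeff (besselCoeff ν))) t
      + (ν + 1) * powerSeriesFun (derivCoeff (besselCoeff ν)) t
      + powerSeriesFun (besselCoeff ν) t = 0 := by
  have hc := abs_besselCoeff_le hν
  have hc₁ := abs_derivCoeff_le hc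
  have hc₂ := abs_derivCoeff_le hc₁
  have h₂ : HasSum (fun s : ℕ => s * derivCoeff (besselCoeff ν) s * t ^ s)
      (t * powerSeriesFun (derivCoeff (derivCoeff (besselCoeff ν))) t) := by
    rw [← hasSum_nat_add_iff' 1, Finset.sum_range_one, Nat.cast_zero, zero_mul, zero_mul,
      sub_zero]
    refine ((summable_powerSeriesFun hc₂ t).hasSum.mul_left t).congr_fun fun s => ?_
    simp only [derivCoeff]
    push_cast
    ring
  have h₁ := (summable_powerSeriesFun hc₁ t).hasSum.mul_left (ν + 1)
  have h₀ := (summable_powerSeriesFun hc t).hasSum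
  refine ((h₂.add h₁).add h₀).unique ?_
  convert hasSum_zero with s
  linear_combination t ^ s * besselCoeff_recurrence hν s

lemma besselJ_eq_rpow_mul (hx : 0 < x) :
    besselJ ν x = (x / 2) ^ ν * powerSeriesFun (besselCoeff ν) ((x / 2) ^ 2) := by
  rw [besselJ, powerSeriesFun, ← tsum_mul_left]
  refine tsum_congr fun s => ?_
  rw [Real.rpow_add (by positivity), Real.rpow_mul_natCast (by positivity), Real.rpow_two,
    besselCoeff]
  ring

/-- `J_ν'(x)`, differentiated termwise from `J_ν(x) = (x/2)^ν · P((x/2)²)`. -/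
def besselJDeriv (ν x : ℝ) : ℝ :=
  (x / 2) ^ ν * (ν / x * powerSeriesFun (besselCoeff ν) ((x / 2) ^ 2)
    + x / 2 * powerSeriesFun (derivCoeff (besselCoeff ν)) ((x / 2) ^ 2))

lemma hasDerivAt_half_rpow (hx : 0 < x) :
    HasDerivAt (fun y : ℝ => (y / 2) ^ ν) (ν / x * (x / 2) ^ ν) x := by
  have h := (Real.hasDerivAt_rpow_const (p := ν) (Or.inl (by positivity : x / 2 ≠ 0))).comp x
    ((hasDerivAt_id' x).div_const 2)
  refine h.congr_deriv ?_
  rw [Real.rpow_sub (by positivity), Real.rpow_one]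
  field_simp

lemma hasDerivAt_comp_half_sq {f : ℝ → ℝ} {f' : ℝ} (x : ℝ)
    (hf : HasDerivAt f f' ((x / 2) ^ 2)) :
    HasDerivAt (fun y : ℝ => f ((y / 2) ^ 2)) (f' * (x / 2)) x := by
  refine (hf.comp x (((hasDerivAt_id' x).div_const 2).pow 2)).congr_deriv ?_
  simp only [Nat.cast_ofNat, Nat.add_one_sub_one, pow_one]
  ring

lemma hasDerivAt_besselJ (hν : 0 ≤ ν) (hx : 0 < x) :
    HasDerivAt (besselJ ν) (besselJDeriv ν x) x := by
  have hP := hasDerivAt_comp_half_sq x (hasDerivAt_powerSeriesFun (abs_besselCoeff_le hν) _)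
  have h := (hasDerivAt_half_rpow (ν := ν) hx).mul hP
  refine (h.congr_deriv (by rw [besselJDeriv]; ring)).congr_of_eventuallyEq ?_
  filter_upwards [Ioi_mem_nhds hx] with y hy using besselJ_eq_rpow_mul hy

lemma continuousOn_besselJ (hν : 0 ≤ ν) : ContinuousOn (besselJ ν) (Ioi 0) :=
  fun _ hx => (hasDerivAt_besselJ hν hx).continuousAt.continuousWithinAt

lemma hasDerivAt_besselJDeriv (hν : 0 ≤ ν) (hx : 0 < x) :
    HasDerivAt (besselJDeriv ν)
      (-besselJDeriv ν x / x - (1 - ν ^ 2 / x ^ 2) * besselJ ν x) x := by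
  have hc := abs_besselCoeff_le hν
  have hP := hasDerivAt_comp_half_sq x (hasDerivAt_powerSeriesFun hc _)
  have hP₁ := hasDerivAt_comp_half_sq x (hasDerivAt_powerSeriesFun (abs_derivCoeff_le hc) _)
  have hq : HasDerivAt (fun y : ℝ => ν / y) (-(ν / x ^ 2)) x := by
    simpa [div_eq_mul_inv] using (hasDerivAt_inv hx.ne').const_mul ν
  have h := (hasDerivAt_half_rpow (ν := ν) hx).mul
    ((hq.mul hP).add (((hasDerivAt_id' x).div_const 2).mul hP₁))
  refine h.congr_deriv ?_
  have hode := powerSeriesFun_besselCoeff_ode hν ((x / 2) ^ 2)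
  simp only [Pi.mul_apply, Pi.add_apply]
  rw [besselJDeriv, besselJ_eq_rpow_mul hx]
  generalize powerSeriesFun (besselCoeff ν) ((x / 2) ^ 2) = P at hode ⊢
  generalize powerSeriesFun (derivCoeff (besselCoeff ν)) ((x / 2) ^ 2) = P₁ at hode ⊢
  generalize powerSeriesFun (derivCoeff (derivCoeff (besselCoeff ν))) ((x / 2) ^ 2) = P₂
    at hode ⊢
  field_simp
  linear_combination 4 * x ^ 2 * hode

end Bessel

lemma eqOn_zero_of_linear_ode {y y' p q : ℝ → ℝ} {c a : ℝ} {K : ℝ≥0}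
    (hy : ∀ t ∈ Icc c a, HasDerivAt y (y' t) t)
    (hy' : ∀ t ∈ Icc c a, HasDerivAt y' (p t * y' t + q t * y t) t)
    (hp : ∀ t ∈ Icc c a, ‖p t‖₊ ≤ K) (hq : ∀ t ∈ Icc c a, ‖q t‖₊ ≤ K)
    (ha : y a = 0) (ha' : y' a = 0) : EqOn y 0 (Icc c a) := by
  let v : ℝ → ℝ × ℝ → ℝ × ℝ := fun t w => (w.2, p t * w.2 + q t * w.1)
  have hv : ∀ t ∈ Ioc c a, LipschitzOnWith (1 + 2 * K) (v t) univ := by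
    intro t ht
    refine (LipschitzWith.prod_snd.prodMk
      (((lipschitzWith_smul (p t)).comp LipschitzWith.prod_snd).add
        ((lipschitzWith_smul (q t)).comp LipschitzWith.prod_fst))).weaken ?_ |>.lipschitzOnWith
    simp only [mul_one]
    have := hp t (Ioc_subset_Icc_self ht)
    have := hq t (Ioc_subset_Icc_self ht)
    refine max_le le_self_add ?_
    calc ‖p t‖₊ + ‖q t‖₊ ≤ 2 * K := by rw [two_mul]; gcongr
      _ ≤ 1 + 2 * K := le_add_self
  have hyy' : ∀ t ∈ Icc c a, HasDerivAt (fun s => (y s, y' s)) (v t (y t, y' t)) t :=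
    fun t ht => (hy t ht).prodMk (hy' t ht)
  have hzero := ODE_solution_unique_of_mem_Icc_left hv
    (fun t ht => (hyy' t ht).continuousAt.continuousWithinAt)
    (fun t ht => (hyy' t (Ioc_subset_Icc_self ht)).hasDerivWithinAt) (fun _ _ => mem_univ _)
    (continuousOn_const (c := ((0 : ℝ), (0 : ℝ))))
    (fun t _ => by simp only [v, mul_zero, add_zero]; exact hasDerivWithinAt_const _ _ _)
    (fun _ _ => mem_univ _) (by simp [ha, ha'])
  exact fun t ht => congrArg Prod.fst (hzero ht)

lemma besselJDeriv_ne_zero_of_besselJ_eq_zero {ν c x : ℝ} (hν : 0 ≤ ν) (hc : 0 < c)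
    (hcx : c ≤ x) (hJc : besselJ ν c ≠ 0) (hJx : besselJ ν x = 0) : besselJDeriv ν x ≠ 0 := by
  intro hJ'x
  let K : ℝ≥0 := ⟨c⁻¹ + (ν ^ 2 / c ^ 2 + 1), by positivity⟩
  have hbound {r : ℝ} (hr : |r| ≤ c⁻¹ + (ν ^ 2 / c ^ 2 + 1)) : ‖r‖₊ ≤ K := by
    rwa [← NNReal.coe_le_coe, coe_nnnorm, Real.norm_eq_abs]
  refine hJc <| eqOn_zero_of_linear_ode (p := fun t => -t⁻¹) (q := fun t => ν ^ 2 / t ^ 2 - 1)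
    (fun t ht => hasDerivAt_besselJ hν (hc.trans_le ht.1))
    (fun t ht => (hasDerivAt_besselJDeriv hν (hc.trans_le ht.1)).congr_deriv (by ring))
    (fun t ht => hbound ?_) (fun t ht => hbound ?_) hJx hJ'x ⟨le_rfl, hcx⟩
  · have ht₀ := hc.trans_le ht.1
    rw [abs_neg, abs_of_pos (inv_pos.mpr ht₀)]
    linarith [inv_anti₀ hc ht.1, show 0 ≤ ν ^ 2 / c ^ 2 by positivity]
  · have hνt : ν ^ 2 / t ^ 2 ≤ ν ^ 2 / c ^ 2 := by gcongr; exact ht.1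
    calc |ν ^ 2 / t ^ 2 - 1| ≤ |ν ^ 2 / t ^ 2| + |1| := abs_sub _ _
      _ ≤ c⁻¹ + (ν ^ 2 / c ^ 2 + 1) := by
        rw [abs_one, abs_of_nonneg (by positivity)]
        linarith [inv_pos.mpr hc]

section Sign

variable {f : ℝ → ℝ} {a b f' : ℝ}

lemma HasDerivAt.nonneg_of_eq_zero_of_pos_right (hf : HasDerivAt f f' a) (ha : f a = 0)
    (hab : a < b) (hpos : ∀ x ∈ Ioo a b, 0 < f x) : 0 ≤ f' := by
  refine ge_of_tendsto hf.tendsto_slope_zero_right ?_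
  filter_upwards [Ioo_mem_nhdsGT (sub_pos.mpr hab)] with t ht
  rw [ha, sub_zero, smul_eq_mul]
  exact (mul_pos (inv_pos.mpr ht.1) (hpos _ ⟨by linarith [ht.1], by linarith [ht.2]⟩)).le

lemma HasDerivAt.nonpos_of_eq_zero_of_pos_left (hf : HasDerivAt f f' b) (hb : f b = 0)
    (hab : a < b) (hpos : ∀ x ∈ Ioo a b, 0 < f x) : f' ≤ 0 := by
  refine le_of_tendsto hf.tendsto_slope_zero_left ?_
  filter_upwards [Ioo_mem_nhdsLT (sub_neg.mpr hab)] with t ht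
  rw [hb, sub_zero, smul_eq_mul]
  exact (mul_neg_of_neg_of_pos (inv_lt_zero.mpr ht.2)
    (hpos _ ⟨by linarith [ht.1], by linarith [ht.2]⟩)).le

lemma IsPreconnected.forall_pos_or_forall_neg {s : Set ℝ} (hs : IsPreconnected s)
    (hf : ContinuousOn f s) (hne : ∀ x ∈ s, f x ≠ 0) :
    (∀ x ∈ s, 0 < f x) ∨ ∀ x ∈ s, f x < 0 := by
  by_contra! h
  obtain ⟨⟨x, hx, hfx⟩, ⟨y, hy, hfy⟩⟩ := h
  obtain ⟨z, hz, hfz⟩ := hs.intermediate_value hx hy hf ⟨hfx, hfy⟩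
  exact hne z hz hfz

lemma mul_nonpos_of_hasDerivAt_of_consecutive_zeros {fa fb : ℝ} (hfa : HasDerivAt f fa a)
    (hfb : HasDerivAt f fb b) (ha : f a = 0) (hb : f b = 0) (hab : a < b)
    (hf : ContinuousOn f (Ioo a b)) (hne : ∀ x ∈ Ioo a b, f x ≠ 0) : fa * fb ≤ 0 := by
  rcases isPreconnected_Ioo.forall_pos_or_forall_neg hf hne with hpos | hneg
  · exact mul_nonpos_of_nonneg_of_nonpos (hfa.nonneg_of_eq_zero_of_pos_right ha hab hpos)
      (hfb.nonpos_of_eq_zero_of_pos_left hb hab hpos)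
  · have hpos : ∀ x ∈ Ioo a b, 0 < (-f) x := fun x hx => neg_pos.mpr (hneg x hx)
    have h₁ := hfa.neg.nonneg_of_eq_zero_of_pos_right (by simp [ha]) hab hpos
    have h₂ := hfb.neg.nonpos_of_eq_zero_of_pos_left (by simp [hb]) hab hpos
    nlinarith

lemma exists_mem_Ioo_eq_zero_of_mul_neg (hab : a ≤ b) (hf : ContinuousOn f (Icc a b))
    (hneg : f a * f b < 0) : ∃ c ∈ Ioo a b, f c = 0 := by
  rcases mul_neg_iff.mp hneg with ⟨ha, hb⟩ | ⟨ha, hb⟩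
  · exact intermediate_value_Ioo' hab hf ⟨hb, ha⟩
  · exact intermediate_value_Ioo hab hf ⟨ha, hb⟩

end Sign

lemma besselJDeriv_mul_besselJDeriv_neg {ν c a b : ℝ} (hν : 0 ≤ ν) (hc : 0 < c) (hca : c ≤ a)
    (hJc : besselJ ν c ≠ 0) (ha : 0 < a) (hab : a < b) (hJa : besselJ ν a = 0)
    (hJb : besselJ ν b = 0) (hJab : ∀ r ∈ Ioo a b, besselJ ν r ≠ 0) :
    besselJDeriv ν a * besselJDeriv ν b < 0 :=
  (mul_nonpos_of_hasDerivAt_of_consecutive_zeros (hasDerivAt_besselJ hν ha)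
    (hasDerivAt_besselJ hν (ha.trans hab)) hJa hJb hab
    ((continuousOn_besselJ hν).mono fun _ hx => ha.trans hx.1) hJab).lt_of_ne <|
    mul_ne_zero (besselJDeriv_ne_zero_of_besselJ_eq_zero hν hc hca hJc hJa)
      (besselJDeriv_ne_zero_of_besselJ_eq_zero hν hc (hca.trans hab.le) hJc hJb)

section Spherical

variable {m : ℕ} {x : ℝ}

lemma hasDerivAt_sqrt_pi_div_two_mul (hx : 0 < x) :
    HasDerivAt (fun y => √(π / (2 * y))) (-√(π / (2 * x)) / (2 * x)) x := by
  have hu : HasDerivAt (fun y => π / (2 * y)) (-(π / (2 * x)) / x) x := by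
    refine ((hasDerivAt_const x π).div ((hasDerivAt_id' x).const_mul 2)
      (by positivity)).congr_deriv ?_
    field_simp
    ring
  refine (hu.sqrt (by positivity)).congr_deriv ?_
  have hs := Real.sq_sqrt (by positivity : 0 ≤ π / (2 * x))
  field_simp
  rw [hs]
  field_simp

lemma hasDerivAt_sphBesselJ (hx : 0 < x) :
    HasDerivAt (sphBesselJ m)
      (√(π / (2 * x)) * (besselJDeriv (m + 1 / 2) x - besselJ (m + 1 / 2) x / (2 * x))) x := by
  refine ((hasDerivAt_sqrt_pi_div_two_mul hx).mul
    (hasDerivAt_besselJ (by positivity) hx)).congr_deriv ?_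
  ring

lemma continuousOn_deriv_sphBesselJ : ContinuousOn (deriv (sphBesselJ m)) (Ioi 0) := by
  intro x (hx : 0 < x)
  have hν : (0 : ℝ) ≤ m + 1 / 2 := by positivity
  have hg : ContinuousAt (fun y => √(π / (2 * y))
      * (besselJDeriv (m + 1 / 2) y - besselJ (m + 1 / 2) y / (2 * y))) x :=
    (hasDerivAt_sqrt_pi_div_two_mul hx).continuousAt.mul
      ((hasDerivAt_besselJDeriv hν hx).continuousAt.sub
        ((hasDerivAt_besselJ hν hx).continuousAt.div (continuousAt_id.const_mul 2)
          (by positivity)))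
  refine (hg.congr ?_).continuousWithinAt
  filter_upwards [Ioi_mem_nhds hx] with y hy using (hasDerivAt_sphBesselJ hy).deriv.symm

lemma deriv_sphBesselJ_of_besselJ_eq_zero (hx : 0 < x) (hJ : besselJ (m + 1 / 2) x = 0) :
    deriv (sphBesselJ m) x = √(π / (2 * x)) * besselJDeriv (m + 1 / 2) x := by
  rw [(hasDerivAt_sphBesselJ hx).deriv, hJ, zero_div, sub_zero]

end Spherical

/-- The characteristic function `f` of the theorem, with `s = √σ`. -/
def transmissionChar (m : ℕ) (s n k : ℝ) : ℝ :=
  besselJ (m + 1 / 2) (k * n / s) * deriv (sphBesselJ m) k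
    - s * n * deriv (sphBesselJ m) (k * n / s) * besselJ (m + 1 / 2) k

section TransmissionChar

variable {m : ℕ} {s n : ℝ}

lemma continuousOn_transmissionChar (hs : 0 < s) (hn : 0 < n) :
    ContinuousOn (transmissionChar m s n) (Ioi 0) := by
  have hν : (0 : ℝ) ≤ m + 1 / 2 := by positivity
  have hscale : ContinuousOn (fun k : ℝ => k * n / s) (Ioi 0) := by fun_prop
  have hmaps : MapsTo (fun k : ℝ => k * n / s) (Ioi 0) (Ioi 0) := fun k (hk : 0 < k) =>
    show 0 < k * n / s by positivity
  exact (((continuousOn_besselJ hν).comp hscale hmaps).mul continuousOn_deriv_sphBesselJ).sub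
    ((continuousOn_const.mul (continuousOn_deriv_sphBesselJ.comp hscale hmaps)).mul
      (continuousOn_besselJ hν))

lemma transmissionChar_of_besselJ_eq_zero (hs : 0 < s) (hn : 0 < n) {k : ℝ} (hk : 0 < k)
    (hJ : besselJ (m + 1 / 2) (k * n / s) = 0) :
    transmissionChar m s n k = -(s * n * √(π / (2 * (k * n / s))) * besselJ (m + 1 / 2) k)
      * besselJDeriv (m + 1 / 2) (k * n / s) := by
  rw [transmissionChar, hJ, deriv_sphBesselJ_of_besselJ_eq_zero (by positivity) hJ]
  ring

end TransmissionChar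

theorem characteristic_root_3d_constant_general
    (σ n : ℝ) (hσ : 0 < σ) (hn : 0 < n)
    (m : ℕ)
    (a b : ℝ) (ha : 0 < a) (hab : a < b)
    (hJa : besselJ ((m : ℝ) + 1 / 2) a = 0) (hJb : besselJ ((m : ℝ) + 1 / 2) b = 0)
    (hJab : ∀ r ∈ Ioo a b, besselJ ((m : ℝ) + 1 / 2) r ≠ 0)
    (hpos : ∀ r ∈ Ioc 0 (Real.sqrt σ * b / n), 0 < besselJ ((m : ℝ) + 1 / 2) r) :
    ∃ k ∈ Ioo (Real.sqrt σ * a / n) (Real.sqrt σ * b / n),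
      besselJ ((m : ℝ) + 1 / 2) (k * n / Real.sqrt σ) * deriv (sphBesselJ m) k
        - Real.sqrt σ * n * deriv (sphBesselJ m) (k * n / Real.sqrt σ)
          * besselJ ((m : ℝ) + 1 / 2) k = 0 := by
  set s := √σ
  have hs : 0 < s := Real.sqrt_pos.mpr hσ
  have hν : (0 : ℝ) ≤ m + 1 / 2 := by positivity
  have hb : 0 < b := ha.trans hab
  have hk₂a : s * b / n < a := not_le.mp fun h => (hpos a ⟨ha, h⟩).ne' hJa
  have hk₁ : 0 < s * a / n := by positivity
  have hk₁₂ : s * a / n < s * b / n := by gcongr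
  have hJk₁ : 0 < besselJ (m + 1 / 2) (s * a / n) := hpos _ ⟨hk₁, hk₁₂.le⟩
  have hJk₂ : 0 < besselJ (m + 1 / 2) (s * b / n) := hpos _ ⟨by positivity, le_rfl⟩
  have hJ'ab : besselJDeriv (m + 1 / 2) a * besselJDeriv (m + 1 / 2) b < 0 :=
    besselJDeriv_mul_besselJDeriv_neg hν (by positivity) hk₂a.le hJk₂.ne' ha hab hJa hJb hJab
  have ha' : s * a / n * n / s = a := by field_simp
  have hb' : s * b / n * n / s = b := by field_simp
  have hF : ContinuousOn (transmissionChar m s n) (Icc (s * a / n) (s * b / n)) :=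
    (continuousOn_transmissionChar hs hn).mono fun k hk => hk₁.trans_le hk.1
  refine exists_mem_Ioo_eq_zero_of_mul_neg (f := transmissionChar m s n) hk₁₂.le hF ?_
  rw [transmissionChar_of_besselJ_eq_zero hs hn hk₁ (ha'.symm ▸ hJa),
    transmissionChar_of_besselJ_eq_zero hs hn (by positivity) (hb'.symm ▸ hJb), ha', hb']
  calc _ = s * n * √(π / (2 * a)) * (s * n * √(π / (2 * b)))
        * (besselJ (m + 1 / 2) (s * a / n) * besselJ (m + 1 / 2) (s * b / n))
        * (besselJDeriv (m + 1 / 2) a * besselJDeriv (m + 1 / 2) b) := by ring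
    _ < 0 := mul_neg_of_pos_of_neg (mul_pos (by positivity) (mul_pos hJk₁ hJk₂)) hJ'ab

/-- Existence of a root of the three-dimensional transmission-eigenvalue characteristic
function `f(k) = J_{m+1/2}(kn/√σ)·j_m'(k) − √σ·n·j_m'(kn/√σ)·J_{m+1/2}(k)` in the interval
`(√σ·a/n, √σ·b/n)`, where `a < b` are consecutive positive zeros of `J_{m+1/2}` and
`√σ·b/n` lies below the first positive zero of `J_{m+1/2}`. -/
theorem characteristic_root_3d_constant
    (σ n : ℝ) (hσ : 0 < σ) (hn : 0 < n) (hns : Real.sqrt σ < n)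
    (m : ℕ) (hm : 1 ≤ m)
    (a b : ℝ) (ha : 0 < a) (hab : a < b)
    (hJa : besselJ ((m : ℝ) + 1 / 2) a = 0) (hJb : besselJ ((m : ℝ) + 1 / 2) b = 0)
    (hJab : ∀ r ∈ Ioo a b, besselJ ((m : ℝ) + 1 / 2) r ≠ 0)
    (hpos : ∀ r ∈ Ioc 0 (Real.sqrt σ * b / n), 0 < besselJ ((m : ℝ) + 1 / 2) r) :
    ∃ k ∈ Ioo (Real.sqrt σ * a / n) (Real.sqrt σ * b / n),
      besselJ ((m : ℝ) + 1 / 2) (k * n / Real.sqrt σ) * deriv (sphBesselJ m) k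
        - Real.sqrt σ * n * deriv (sphBesselJ m) (k * n / Real.sqrt σ)
          * besselJ ((m : ℝ) + 1 / 2) k = 0 :=
  characteristic_root_3d_constant_general σ n hσ hn m a b ha hab hJa hJb hJab hpos

end
end
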